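/- arXiv:1707.08936 — 2 statements merged into one kernel-verified Lean document; each statement's English description precedes it below -/
import Mathlib

section
/- Let φ : ℝ × ℝ² → ℝ be C² on a neighborhood of (t₀, x₀), let θ₀ = (θ₀¹, θ₀²) ∈ ℝ² with θ₀¹ > 0, and set t₀ = arctan(θ₀²/θ₀¹). For j = 1, 2 define Fⱼ on {θ ∈ ℝ² : θ¹ > 0} by Fⱼ(θ) = √((θ¹)² + (θ²)²) · (∂φ/∂xʲ)(arctan(θ²/θ¹), x₀); these are the mixed partials ∂ϕ/∂xʲ of the homogeneous degree-one extension ϕ(x,θ) = |θ|·φ(arg θ, x). Then the 2×2 matrix with entries Mᵢⱼ = ∂Fⱼ/∂θⁱ(θ₀) (i, j = 1, 2) is invertible (det M ≠ 0) if and only if h(t₀, x₀) ≠ 0. (Proposition 3.1.) -/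
/-- Spatial partial derivative ∂φ/∂x¹. -/
noncomputable def dx1 (φ : ℝ → ℝ → ℝ → ℝ) (t x₁ x₂ : ℝ) : ℝ :=
  deriv (fun y => φ t y x₂) x₁

/-- Spatial partial derivative ∂φ/∂x². -/
noncomputable def dx2 (φ : ℝ → ℝ → ℝ → ℝ) (t x₁ x₂ : ℝ) : ℝ :=
  deriv (fun y => φ t x₁ y) x₂

/-- The Bolker determinant. -/
noncomputable def bolker (φ : ℝ → ℝ → ℝ → ℝ) (t x₁ x₂ : ℝ) : ℝ :=
  dx1 φ t x₁ x₂ * deriv (fun s => dx2 φ s x₁ x₂) t -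
    dx2 φ t x₁ x₂ * deriv (fun s => dx1 φ s x₁ x₂) t

/-- F_j(θ) = |θ| · ∂φ/∂xʲ(arctan(θ²/θ¹), x₀) on the right half plane:
the mixed partial ∂ϕ/∂xʲ of the homogeneous degree-one extension. -/
noncomputable def Fj (φ : ℝ → ℝ → ℝ → ℝ) (x₁ x₂ : ℝ)
    (dxj : (ℝ → ℝ → ℝ → ℝ) → ℝ → ℝ → ℝ → ℝ) (θ : ℝ × ℝ) : ℝ :=
  Real.sqrt (θ.1 ^ 2 + θ.2 ^ 2) * dxj φ (Real.arctan (θ.2 / θ.1)) x₁ x₂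

/-!
Write `Fⱼ(θ) = |θ| gⱼ(arg θ)` with `gⱼ(t) = ∂φ/∂xʲ(t, x₀)`. The chain rule gives
`∂Fⱼ/∂θ¹ = (θ¹ gⱼ - θ² gⱼ')/|θ|` and `∂Fⱼ/∂θ² = (θ² gⱼ + θ¹ gⱼ')/|θ|`, i.e. the matrix `M` is the
rotation by `arg θ₀` applied to the matrix with rows `(g₁, g₂)` and `(g₁', g₂')`. Hence
`det M = g₁ g₂' - g₂ g₁' = h(t₀, x₀)`.
-/

open Real

section SpatialPartials

variable {φ : ℝ → ℝ → ℝ → ℝ} {t₀ x₁ x₂ : ℝ}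

theorem differentiableAt_fderiv_apply_comp {E F : Type*} [NormedAddCommGroup E] [NormedSpace ℝ E]
    [NormedAddCommGroup F] [NormedSpace ℝ F] {Φ : E → F} {γ : ℝ → E} {t : ℝ}
    (hΦ : ContDiffAt ℝ 2 Φ (γ t)) (hγ : DifferentiableAt ℝ γ t) (v : E) :
    DifferentiableAt ℝ (fun s => fderiv ℝ Φ (γ s) v) t :=
  (((hΦ.fderiv_right (m := 1) (by norm_num)).differentiableAt one_ne_zero).comp t hγ).clm_apply
    (differentiableAt_const v)

theorem dx1_eq_fderiv
    (h : DifferentiableAt ℝ (fun p : ℝ × ℝ × ℝ => φ p.1 p.2.1 p.2.2) (t₀, x₁, x₂)) :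
    dx1 φ t₀ x₁ x₂ = fderiv ℝ (fun p : ℝ × ℝ × ℝ => φ p.1 p.2.1 p.2.2) (t₀, x₁, x₂) (0, 1, 0) := by
  have := h.hasFDerivAt.comp_hasDerivAt x₁
    ((hasDerivAt_const x₁ t₀).prodMk ((hasDerivAt_id' x₁).prodMk (hasDerivAt_const x₁ x₂)))
  exact this.deriv

theorem dx2_eq_fderiv
    (h : DifferentiableAt ℝ (fun p : ℝ × ℝ × ℝ => φ p.1 p.2.1 p.2.2) (t₀, x₁, x₂)) :
    dx2 φ t₀ x₁ x₂ = fderiv ℝ (fun p : ℝ × ℝ × ℝ => φ p.1 p.2.1 p.2.2) (t₀, x₁, x₂) (0, 0, 1) := by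
  have := h.hasFDerivAt.comp_hasDerivAt x₂
    ((hasDerivAt_const x₂ t₀).prodMk ((hasDerivAt_const x₂ x₁).prodMk (hasDerivAt_id' x₂)))
  exact this.deriv

theorem eventually_contDiffAt_along_time
    (hφ : ContDiffAt ℝ 2 (fun p : ℝ × ℝ × ℝ => φ p.1 p.2.1 p.2.2) (t₀, x₁, x₂)) :
    ∀ᶠ s in nhds t₀, ContDiffAt ℝ 2 (fun p : ℝ × ℝ × ℝ => φ p.1 p.2.1 p.2.2) (s, x₁, x₂) :=
  ((continuous_id.prodMk continuous_const).tendsto t₀).eventually (hφ.eventually (by simp))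

theorem differentiableAt_dx1
    (hφ : ContDiffAt ℝ 2 (fun p : ℝ × ℝ × ℝ => φ p.1 p.2.1 p.2.2) (t₀, x₁, x₂)) :
    DifferentiableAt ℝ (fun s => dx1 φ s x₁ x₂) t₀ :=
  (differentiableAt_fderiv_apply_comp hφ (differentiableAt_id.prodMk (differentiableAt_const _))
    _).congr_of_eventuallyEq <| (eventually_contDiffAt_along_time hφ).mono fun _ hs =>
      dx1_eq_fderiv (hs.differentiableAt (by norm_num))

theorem differentiableAt_dx2
    (hφ : ContDiffAt ℝ 2 (fun p : ℝ × ℝ × ℝ => φ p.1 p.2.1 p.2.2) (t₀, x₁, x₂)) :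
    DifferentiableAt ℝ (fun s => dx2 φ s x₁ x₂) t₀ :=
  (differentiableAt_fderiv_apply_comp hφ (differentiableAt_id.prodMk (differentiableAt_const _))
    _).congr_of_eventuallyEq <| (eventually_contDiffAt_along_time hφ).mono fun _ hs =>
      dx2_eq_fderiv (hs.differentiableAt (by norm_num))

end SpatialPartials

section PolarExtension

variable {g : ℝ → ℝ} {g' θ₁ θ₂ : ℝ}

theorem hasDerivAt_sqrt_sq_add_sq_left (hθ : θ₁ ≠ 0) :
    HasDerivAt (fun a => √(a ^ 2 + θ₂ ^ 2)) (θ₁ / √(θ₁ ^ 2 + θ₂ ^ 2)) θ₁ := by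
  have hin : HasDerivAt (fun a : ℝ => a ^ 2 + θ₂ ^ 2) (2 * θ₁) θ₁ := by
    simpa using (hasDerivAt_pow 2 θ₁).add_const (θ₂ ^ 2)
  convert (hin.sqrt (by positivity)) using 1
  ring

theorem hasDerivAt_sqrt_sq_add_sq_right (hθ : θ₁ ≠ 0) :
    HasDerivAt (fun b => √(θ₁ ^ 2 + b ^ 2)) (θ₂ / √(θ₁ ^ 2 + θ₂ ^ 2)) θ₂ := by
  have hin : HasDerivAt (fun b : ℝ => θ₁ ^ 2 + b ^ 2) (2 * θ₂) θ₂ := by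
    simpa using (hasDerivAt_pow 2 θ₂).const_add (θ₁ ^ 2)
  convert (hin.sqrt (by positivity)) using 1
  ring

theorem hasDerivAt_arctan_div_left (hθ : θ₁ ≠ 0) :
    HasDerivAt (fun a => arctan (θ₂ / a)) (-θ₂ / (θ₁ ^ 2 + θ₂ ^ 2)) θ₁ := by
  have hdiv : HasDerivAt (fun a : ℝ => θ₂ / a) (-θ₂ / θ₁ ^ 2) θ₁ := by
    simpa [Pi.div_def] using (hasDerivAt_const θ₁ θ₂).div (hasDerivAt_id' θ₁) hθ
  convert hdiv.arctan using 1
  field_simp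

theorem hasDerivAt_arctan_div_right (hθ : θ₁ ≠ 0) :
    HasDerivAt (fun b => arctan (b / θ₁)) (θ₁ / (θ₁ ^ 2 + θ₂ ^ 2)) θ₂ := by
  refine ((hasDerivAt_id' θ₂).div_const θ₁).arctan.congr_deriv ?_
  field_simp

theorem hasDerivAt_polar_extension_left (hθ : θ₁ ≠ 0) (hg : HasDerivAt g g' (arctan (θ₂ / θ₁))) :
    HasDerivAt (fun a => √(a ^ 2 + θ₂ ^ 2) * g (arctan (θ₂ / a)))
      ((θ₁ * g (arctan (θ₂ / θ₁)) - θ₂ * g') / √(θ₁ ^ 2 + θ₂ ^ 2)) θ₁ := by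
  have hr : √(θ₁ ^ 2 + θ₂ ^ 2) ^ 2 = θ₁ ^ 2 + θ₂ ^ 2 := sq_sqrt (by positivity)
  refine ((hasDerivAt_sqrt_sq_add_sq_left hθ).mul
    (hg.comp θ₁ (hasDerivAt_arctan_div_left hθ))).congr_deriv ?_
  simp only [Function.comp_apply]
  field_simp
  linear_combination -θ₂ * g' * hr

theorem hasDerivAt_polar_extension_right (hθ : θ₁ ≠ 0) (hg : HasDerivAt g g' (arctan (θ₂ / θ₁))) :
    HasDerivAt (fun b => √(θ₁ ^ 2 + b ^ 2) * g (arctan (b / θ₁)))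
      ((θ₂ * g (arctan (θ₂ / θ₁)) + θ₁ * g') / √(θ₁ ^ 2 + θ₂ ^ 2)) θ₂ := by
  have hr : √(θ₁ ^ 2 + θ₂ ^ 2) ^ 2 = θ₁ ^ 2 + θ₂ ^ 2 := sq_sqrt (by positivity)
  refine ((hasDerivAt_sqrt_sq_add_sq_right hθ).mul
    (hg.comp θ₂ (hasDerivAt_arctan_div_right hθ))).congr_deriv ?_
  simp only [Function.comp_apply]
  field_simp
  linear_combination θ₁ * g' * hr

end PolarExtension

theorem polar_det_eq {θ₁ θ₂ r a a' b b' : ℝ} (hr : r ^ 2 = θ₁ ^ 2 + θ₂ ^ 2) (hr0 : r ≠ 0) :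
    (θ₁ * a - θ₂ * a') / r * ((θ₂ * b + θ₁ * b') / r) -
        (θ₁ * b - θ₂ * b') / r * ((θ₂ * a + θ₁ * a') / r) = a * b' - b * a' := by
  field_simp
  linear_combination (b * a' - a * b') * hr

/-- Proposition 3.1: the matrix Mᵢⱼ = ∂Fⱼ/∂θⁱ(θ₀) is invertible iff
the local Bolker condition h(t₀,x₀) ≠ 0 holds. -/
theorem stmt1 (φ : ℝ → ℝ → ℝ → ℝ) (x₁ x₂ θ₁ θ₂ t₀ : ℝ) (hθ : 0 < θ₁)
    (ht₀ : t₀ = Real.arctan (θ₂ / θ₁))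
    (hφ : ContDiffAt ℝ 2 (fun p : ℝ × ℝ × ℝ => φ p.1 p.2.1 p.2.2) (t₀, x₁, x₂)) :
    (Matrix.det
      !![deriv (fun a => Fj φ x₁ x₂ dx1 (a, θ₂)) θ₁,
           deriv (fun a => Fj φ x₁ x₂ dx2 (a, θ₂)) θ₁;
         deriv (fun b => Fj φ x₁ x₂ dx1 (θ₁, b)) θ₂,
           deriv (fun b => Fj φ x₁ x₂ dx2 (θ₁, b)) θ₂] ≠ 0) ↔
      bolker φ t₀ x₁ x₂ ≠ 0 := by
  subst ht₀
  have h₁ := (differentiableAt_dx1 hφ).hasDerivAt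
  have h₂ := (differentiableAt_dx2 hφ).hasDerivAt
  simp only [Matrix.det_fin_two_of, Fj]
  rw [(hasDerivAt_polar_extension_left hθ.ne' h₁).deriv,
    (hasDerivAt_polar_extension_left hθ.ne' h₂).deriv,
    (hasDerivAt_polar_extension_right hθ.ne' h₁).deriv,
    (hasDerivAt_polar_extension_right hθ.ne' h₂).deriv,
    polar_det_eq (sq_sqrt (by positivity)) (by positivity), bolker]
end

section
/- Let φ : ℝ × ℝ² → ℝ be C² on a neighborhood of (t₀, x₀), let σ₀ ≠ 0, and assume h(t₀, x₀) ≠ 0. Set p = (t₀, x₀, σ₀), Π_Y(t,x,σ) = (φ(t,x), t, σ, −σ·∂ₜφ(t,x)) ∈ ℝ⁴ and Π_X(t,x,σ) = (x, σ·∇ₓφ(t,x)) ∈ ℝ⁴. Then the correspondence Π_X ∘ Π_Y⁻¹ from measurement covectors to position covectors is a local diffeomorphism at Π_Y(p): there exist an open neighborhood U of p, an open neighborhood W of Π_Y(p), and a map T : W → ℝ⁴ that is a C¹ diffeomorphism onto its (open) image, such that T(Π_Y(q)) = Π_X(q) for all q ∈ U. (Lemma 4.3.) -/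
/-!
The projections `Π_Y` and `Π_X` are both local `C¹` diffeomorphisms at `p`, so
`T = Π_X ∘ Π_Y⁻¹` is one near `Π_Y p`, with inverse `Π_Y ∘ Π_X⁻¹`. Both Jacobians at `p` are
invertible because of `h ≠ 0` and `σ₀ ≠ 0`: a kernel vector `(δt, δx, δσ)` of `dΠ_Y` has
`δt = δσ = 0` and `δx` solves a `2 × 2` system of determinant `σ₀ h` (by symmetry of the
Hessian of `φ`), while one of `dΠ_X` has `δx = 0` and `(σ₀ δt, δσ)` solves a system of
determinant `-h`.
-/

/-- Time partial derivative ∂ₜφ. -/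
noncomputable def dt (φ : ℝ → ℝ → ℝ → ℝ) (t x₁ x₂ : ℝ) : ℝ :=
  deriv (fun s => φ s x₁ x₂) t

/-- Measurement-side projection Π_Y(t, x, σ) = (φ(t,x), t, σ, −σ·∂ₜφ(t,x)). -/
noncomputable def PiY (φ : ℝ → ℝ → ℝ → ℝ) (p : ℝ × ℝ × ℝ × ℝ) : ℝ × ℝ × ℝ × ℝ :=
  (φ p.1 p.2.1 p.2.2.1, p.1, p.2.2.2, -p.2.2.2 * dt φ p.1 p.2.1 p.2.2.1)

/-- Position-side projection Π_X(t, x, σ) = (x, σ·∇ₓφ(t,x)). -/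
noncomputable def PiX (φ : ℝ → ℝ → ℝ → ℝ) (p : ℝ × ℝ × ℝ × ℝ) : ℝ × ℝ × ℝ × ℝ :=
  (p.2.1, p.2.2.1, p.2.2.2 * dx1 φ p.1 p.2.1 p.2.2.1,
    p.2.2.2 * dx2 φ p.1 p.2.1 p.2.2.1)

open Filter Topology Set
open scoped ContDiff

section LocalDiffeomorph

variable {𝕜 : Type*} [RCLike 𝕜] {E F G : Type*}
  [NormedAddCommGroup E] [NormedSpace 𝕜 E]
  [NormedAddCommGroup F] [NormedSpace 𝕜 F] [NormedAddCommGroup G] [NormedSpace 𝕜 G]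
  {n : WithTop ℕ∞}

theorem ContDiffAt.exists_openPartialHomeomorph_contDiffAt [CompleteSpace E] {f : E → F}
    {f' : E ≃L[𝕜] F} {p : E} (hf : ContDiffAt 𝕜 n f p)
    (hf' : HasFDerivAt f (f' : E →L[𝕜] F) p) (hn : n ≠ 0) (hn' : n ≠ ∞) :
    ∃ e : OpenPartialHomeomorph E F, ⇑e = f ∧ p ∈ e.source ∧
      (∀ q ∈ e.source, ContDiffAt 𝕜 n f q) ∧ ∀ y ∈ e.target, ContDiffAt 𝕜 n e.symm y := by
  set e := hf.toOpenPartialHomeomorph f hf' hn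
  have hsymm : ContDiffAt 𝕜 n e.symm (f p) := hf.to_localInverse hf' hn
  obtain ⟨s, hs, hso, hps⟩ := eventually_nhds_iff.1
    ((hf.eventually hn').and (hf.continuousAt.eventually (hsymm.eventually hn')))
  refine ⟨e.restrOpen s hso, rfl, ⟨hf.mem_toOpenPartialHomeomorph_source hf' hn, hps⟩,
    fun q hq ↦ (hs q hq.2).1, fun y ⟨hy, hys⟩ ↦ ?_⟩
  rw [OpenPartialHomeomorph.coe_restrOpen_symm, ← e.right_inv hy]
  exact (hs _ hys).2

theorem OpenPartialHomeomorph.contDiffOn_trans {e : OpenPartialHomeomorph E F}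
    {e' : OpenPartialHomeomorph F G} (he : ∀ x ∈ e.source, ContDiffAt 𝕜 n e x)
    (he' : ∀ y ∈ e'.source, ContDiffAt 𝕜 n e' y) :
    ContDiffOn 𝕜 n (e.trans e') (e.trans e').source := fun x ⟨hx, hx'⟩ ↦
  ((he' _ hx').comp x (he x hx)).contDiffWithinAt

theorem exists_contDiffOn_comp_localInverse [CompleteSpace E] {f : E → F} {g : E → G}
    {f' : E ≃L[𝕜] F} {g' : E ≃L[𝕜] G} {p : E} (hf : ContDiffAt 𝕜 n f p)
    (hf' : HasFDerivAt f (f' : E →L[𝕜] F) p) (hg : ContDiffAt 𝕜 n g p)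
    (hg' : HasFDerivAt g (g' : E →L[𝕜] G) p) (hn : n ≠ 0) (hn' : n ≠ ∞) :
    ∃ (U : Set E) (W : Set F) (T : F → G) (S : G → F),
      IsOpen U ∧ p ∈ U ∧ IsOpen W ∧ f p ∈ W ∧
      IsOpen (T '' W) ∧ InjOn T W ∧ ContDiffOn 𝕜 n T W ∧
      ContDiffOn 𝕜 n S (T '' W) ∧ (∀ w ∈ W, S (T w) = w) ∧ (∀ q ∈ U, T (f q) = g q) := by
  obtain ⟨e, rfl, hpe, he, he_symm⟩ := hf.exists_openPartialHomeomorph_contDiffAt hf' hn hn'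
  obtain ⟨e', rfl, hpe', he', he'_symm⟩ := hg.exists_openPartialHomeomorph_contDiffAt hg' hn hn'
  set T := e.symm.trans e'
  have hT : T '' T.source = T.target := T.image_source_eq_target
  refine ⟨e.source ∩ e'.source, T.source, T, T.symm, e.open_source.inter e'.open_source,
    ⟨hpe, hpe'⟩, T.open_source, ⟨e.map_source hpe, by simpa [e.left_inv hpe] using hpe'⟩,
    hT ▸ T.open_target, T.injOn, OpenPartialHomeomorph.contDiffOn_trans (e := e.symm) he_symm he',
    hT ▸ ?_,
    fun w hw ↦ T.left_inv hw, fun q ⟨hq, hq'⟩ ↦ by simp [T, e.left_inv hq]⟩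
  exact OpenPartialHomeomorph.contDiffOn_trans (e := e'.symm) he'_symm he

theorem ContDiffAt.eventually_differentiableAt {𝕜 E F : Type*} [NontriviallyNormedField 𝕜]
    [NormedAddCommGroup E] [NormedSpace 𝕜 E] [NormedAddCommGroup F] [NormedSpace 𝕜 F]
    {f : E → F} {x : E} {n : ℕ} (hf : ContDiffAt 𝕜 n f x) (hn : n ≠ 0) :
    ∀ᶠ y in 𝓝 x, DifferentiableAt 𝕜 f y :=
  (hf.eventually (by simp)).mono fun _ hy ↦ hy.differentiableAt (by exact_mod_cast hn)

theorem LinearMapClass.map_triple {R M F : Type*} [Semiring R] [AddCommMonoid M] [Module R M]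
    [FunLike F (R × R × R) M] [LinearMapClass F R (R × R × R) M] (ℓ : F) (x y z : R) :
    ℓ (x, y, z) = x • ℓ (1, 0, 0) + y • ℓ (0, 1, 0) + z • ℓ (0, 0, 1) := by
  rw [← map_smul, ← map_smul, ← map_smul, ← map_add, ← map_add]
  simp

theorem HasFDerivAt.exists_continuousLinearEquiv {𝕜 E : Type*} [NontriviallyNormedField 𝕜]
    [CompleteSpace 𝕜] [NormedAddCommGroup E] [NormedSpace 𝕜 E] [FiniteDimensional 𝕜 E]
    {f : E → E} {L : E →L[𝕜] E} {x : E} (hf : HasFDerivAt f L x) (hL : Function.Injective L) :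
    ∃ e : E ≃L[𝕜] E, HasFDerivAt f (e : E →L[𝕜] E) x :=
  ⟨(LinearEquiv.ofInjectiveEndo L.toLinearMap hL).toContinuousLinearEquiv, hf⟩

theorem eq_zero_and_eq_zero_of_mul_sub_mul_ne_zero {R : Type*} [CommRing R] [NoZeroDivisors R]
    {a b c d x y : R} (h : a * d - b * c ≠ 0) (h₁ : x * a + y * b = 0) (h₂ : x * c + y * d = 0) :
    x = 0 ∧ y = 0 :=
  ⟨(mul_eq_zero.1 (by linear_combination d * h₁ - b * h₂ : x * (a * d - b * c) = 0)).resolve_right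
      h,
    (mul_eq_zero.1 (by linear_combination a * h₂ - c * h₁ : y * (a * d - b * c) = 0)).resolve_right
      h⟩

def uncurry3 (φ : ℝ → ℝ → ℝ → ℝ) : ℝ × ℝ × ℝ → ℝ := fun z ↦ φ z.1 z.2.1 z.2.2

def forgetCovector : ℝ × ℝ × ℝ × ℝ →L[ℝ] ℝ × ℝ × ℝ :=
  (ContinuousLinearMap.id ℝ ℝ).prodMap
    ((ContinuousLinearMap.id ℝ ℝ).prodMap (ContinuousLinearMap.fst ℝ ℝ ℝ))

@[simp] theorem forgetCovector_apply (q : ℝ × ℝ × ℝ × ℝ) :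
    forgetCovector q = (q.1, q.2.1, q.2.2.1) := rfl

section Partials

variable {φ : ℝ → ℝ → ℝ → ℝ} {t a b : ℝ}

theorem dt_eq_fderiv (h : DifferentiableAt ℝ (uncurry3 φ) (t, a, b)) :
    dt φ t a b = fderiv ℝ (uncurry3 φ) (t, a, b) (1, 0, 0) :=
  (h.hasFDerivAt.comp_hasDerivAt (f := fun s ↦ (s, a, b)) t
    ((hasDerivAt_id t).prodMk ((hasDerivAt_const t a).prodMk (hasDerivAt_const t b)))).deriv

theorem dx1_eq_fderiv_s7 (h : DifferentiableAt ℝ (uncurry3 φ) (t, a, b)) :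
    dx1 φ t a b = fderiv ℝ (uncurry3 φ) (t, a, b) (0, 1, 0) :=
  (h.hasFDerivAt.comp_hasDerivAt (f := fun s ↦ (t, s, b)) a
    ((hasDerivAt_const a t).prodMk ((hasDerivAt_id a).prodMk (hasDerivAt_const a b)))).deriv

theorem dx2_eq_fderiv_s7 (h : DifferentiableAt ℝ (uncurry3 φ) (t, a, b)) :
    dx2 φ t a b = fderiv ℝ (uncurry3 φ) (t, a, b) (0, 0, 1) :=
  (h.hasFDerivAt.comp_hasDerivAt (f := fun s ↦ (t, a, s)) b
    ((hasDerivAt_const b t).prodMk ((hasDerivAt_const b a).prodMk (hasDerivAt_id b)))).deriv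

theorem bolker_eq_fderiv (hφ : ContDiffAt ℝ 2 (uncurry3 φ) (t, a, b)) :
    bolker φ t a b =
      fderiv ℝ (uncurry3 φ) (t, a, b) (0, 1, 0) *
          fderiv ℝ (fderiv ℝ (uncurry3 φ)) (t, a, b) (1, 0, 0) (0, 0, 1) -
        fderiv ℝ (uncurry3 φ) (t, a, b) (0, 0, 1) *
          fderiv ℝ (fderiv ℝ (uncurry3 φ)) (t, a, b) (1, 0, 0) (0, 1, 0) := by
  have hline : HasDerivAt (fun s : ℝ ↦ (s, a, b)) (1, 0, 0) t :=
    (hasDerivAt_id t).prodMk ((hasDerivAt_const t a).prodMk (hasDerivAt_const t b))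
  have hdiff : ∀ᶠ s in 𝓝 t, DifferentiableAt ℝ (uncurry3 φ) (s, a, b) :=
    hline.continuousAt.eventually (hφ.eventually_differentiableAt two_ne_zero)
  have hD2 : DifferentiableAt ℝ (fderiv ℝ (uncurry3 φ)) (t, a, b) :=
    (hφ.fderiv_right (m := 1) le_rfl).differentiableAt one_ne_zero
  have hslice : ∀ v, deriv (fun s ↦ fderiv ℝ (uncurry3 φ) (s, a, b) v) t =
      fderiv ℝ (fderiv ℝ (uncurry3 φ)) (t, a, b) (1, 0, 0) v := fun v ↦
    (((ContinuousLinearMap.apply ℝ ℝ v).hasFDerivAt.comp _ hD2.hasFDerivAt).comp_hasDerivAt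
      (f := fun s ↦ (s, a, b)) t hline).deriv
  rw [bolker, dx1_eq_fderiv_s7 (hφ.differentiableAt two_ne_zero),
    dx2_eq_fderiv_s7 (hφ.differentiableAt two_ne_zero),
    EventuallyEq.deriv_eq (hdiff.mono fun _ ↦ dx1_eq_fderiv_s7),
    EventuallyEq.deriv_eq (hdiff.mono fun _ ↦ dx2_eq_fderiv_s7), hslice, hslice]

end Partials

section Projections

variable {φ : ℝ → ℝ → ℝ → ℝ} {t a b σ : ℝ}

theorem piY_eventuallyEq (hφ : ContDiffAt ℝ 2 (uncurry3 φ) (t, a, b)) :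
    PiY φ =ᶠ[𝓝 (t, a, b, σ)] fun q ↦ (uncurry3 φ (forgetCovector q), q.1, q.2.2.2,
      -q.2.2.2 * fderiv ℝ (uncurry3 φ) (forgetCovector q) (1, 0, 0)) :=
  (forgetCovector.continuous.tendsto (t, a, b, σ) |>.eventually
    (hφ.eventually_differentiableAt two_ne_zero)).mono fun _ hq ↦ by
      rw [forgetCovector_apply] at hq
      rw [PiY, dt_eq_fderiv hq]; rfl

theorem piX_eventuallyEq (hφ : ContDiffAt ℝ 2 (uncurry3 φ) (t, a, b)) :
    PiX φ =ᶠ[𝓝 (t, a, b, σ)] fun q ↦ (q.2.1, q.2.2.1,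
      q.2.2.2 * fderiv ℝ (uncurry3 φ) (forgetCovector q) (0, 1, 0),
      q.2.2.2 * fderiv ℝ (uncurry3 φ) (forgetCovector q) (0, 0, 1)) :=
  (forgetCovector.continuous.tendsto (t, a, b, σ) |>.eventually
    (hφ.eventually_differentiableAt two_ne_zero)).mono fun _ hq ↦ by
      rw [forgetCovector_apply] at hq
      rw [PiX, dx1_eq_fderiv_s7 hq, dx2_eq_fderiv_s7 hq]; rfl

theorem contDiffAt_piY (hφ : ContDiffAt ℝ 2 (uncurry3 φ) (t, a, b)) :
    ContDiffAt ℝ 1 (PiY φ) (t, a, b, σ) := by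
  have h₁ : ContDiffAt ℝ 1 (uncurry3 φ) (forgetCovector (t, a, b, σ)) := hφ.of_le one_le_two
  have h₂ : ContDiffAt ℝ 1 (fderiv ℝ (uncurry3 φ)) (forgetCovector (t, a, b, σ)) :=
    hφ.fderiv_right le_rfl
  refine ContDiffAt.congr_of_eventuallyEq ?_ (piY_eventuallyEq hφ)
  fun_prop

theorem contDiffAt_piX (hφ : ContDiffAt ℝ 2 (uncurry3 φ) (t, a, b)) :
    ContDiffAt ℝ 1 (PiX φ) (t, a, b, σ) := by
  have h₂ : ContDiffAt ℝ 1 (fderiv ℝ (uncurry3 φ)) (forgetCovector (t, a, b, σ)) :=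
    hφ.fderiv_right le_rfl
  refine ContDiffAt.congr_of_eventuallyEq ?_ (piX_eventuallyEq hφ)
  fun_prop

theorem exists_hasFDerivAt_piY (hφ : ContDiffAt ℝ 2 (uncurry3 φ) (t, a, b)) (hσ : σ ≠ 0)
    (hB : bolker φ t a b ≠ 0) :
    ∃ e : (ℝ × ℝ × ℝ × ℝ) ≃L[ℝ] ℝ × ℝ × ℝ × ℝ,
      HasFDerivAt (PiY φ) (e : _ →L[ℝ] _) (t, a, b, σ) := by
  have hD : HasFDerivAt (uncurry3 φ) (fderiv ℝ (uncurry3 φ) (t, a, b))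
      (forgetCovector (t, a, b, σ)) :=
    (hφ.differentiableAt two_ne_zero).hasFDerivAt
  have hH : HasFDerivAt (fderiv ℝ (uncurry3 φ)) (fderiv ℝ (fderiv ℝ (uncurry3 φ)) (t, a, b))
      (forgetCovector (t, a, b, σ)) :=
    ((hφ.fderiv_right (m := 1) le_rfl).differentiableAt one_ne_zero).hasFDerivAt
  have hP := forgetCovector.hasFDerivAt (x := (t, a, b, σ))
  have hσq := (hasFDerivAt_snd (𝕜 := ℝ) (p := (t, a, b, σ))).snd.snd
  have hM := (hD.comp _ hP).prodMk (hasFDerivAt_fst.prodMk (hσq.prodMk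
    (hσq.neg.mul ((hH.clm_apply (hasFDerivAt_const ((1 : ℝ), (0 : ℝ), (0 : ℝ)) _)).comp _ hP))))
  refine (hM.congr_of_eventuallyEq (piY_eventuallyEq hφ)).exists_continuousLinearEquiv ?_
  rw [injective_iff_map_eq_zero]
  rintro ⟨vt, v1, v2, vσ⟩ hv
  simp only [ContinuousLinearMap.prod_apply, ContinuousLinearMap.coe_comp, Function.comp_apply,
    add_apply, FunLike.coe_smul, Pi.smul_apply, Pi.neg_apply, neg_apply,
    ContinuousLinearMap.coe_fst', ContinuousLinearMap.coe_snd', ContinuousLinearMap.flip_apply,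
    zero_apply, map_zero, zero_add, forgetCovector_apply, smul_eq_mul, Prod.mk_eq_zero] at hv
  obtain ⟨h₁, rfl, rfl, h₂⟩ := hv
  rw [bolker_eq_fderiv hφ] at hB
  -- `h₂` involves `∂ₓ∂ₜφ`, while the Bolker determinant involves `∂ₜ∂ₓφ`.
  have hsymm := hφ.isSymmSndFDerivAt (by simp)
  set D := fderiv ℝ (uncurry3 φ) (t, a, b)
  set H := fderiv ℝ (fderiv ℝ (uncurry3 φ)) (t, a, b)
  rw [LinearMapClass.map_triple D] at h₁
  rw [LinearMapClass.map_triple H, add_apply, add_apply, smul_apply, smul_apply, smul_apply,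
    hsymm (0, 1, 0), hsymm (0, 0, 1)] at h₂
  obtain ⟨rfl, rfl⟩ := eq_zero_and_eq_zero_of_mul_sub_mul_ne_zero hB (by linear_combination h₁)
    ((mul_eq_zero.1 (by linear_combination -h₂ :
      σ * (v1 * H (1, 0, 0) (0, 1, 0) + v2 * H (1, 0, 0) (0, 0, 1)) = 0)).resolve_left hσ)
  rfl

theorem exists_hasFDerivAt_piX (hφ : ContDiffAt ℝ 2 (uncurry3 φ) (t, a, b)) (hσ : σ ≠ 0)
    (hB : bolker φ t a b ≠ 0) :
    ∃ e : (ℝ × ℝ × ℝ × ℝ) ≃L[ℝ] ℝ × ℝ × ℝ × ℝ,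
      HasFDerivAt (PiX φ) (e : _ →L[ℝ] _) (t, a, b, σ) := by
  have hH : HasFDerivAt (fderiv ℝ (uncurry3 φ)) (fderiv ℝ (fderiv ℝ (uncurry3 φ)) (t, a, b))
      (forgetCovector (t, a, b, σ)) :=
    ((hφ.fderiv_right (m := 1) le_rfl).differentiableAt one_ne_zero).hasFDerivAt
  have hP := forgetCovector.hasFDerivAt (x := (t, a, b, σ))
  have hq := hasFDerivAt_snd (𝕜 := ℝ) (p := (t, a, b, σ))
  have hξ₁ := hq.snd.snd.mul
    ((hH.clm_apply (hasFDerivAt_const ((0 : ℝ), (1 : ℝ), (0 : ℝ)) _)).comp _ hP)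
  have hξ₂ := hq.snd.snd.mul
    ((hH.clm_apply (hasFDerivAt_const ((0 : ℝ), (0 : ℝ), (1 : ℝ)) _)).comp _ hP)
  have hM := hq.fst.prodMk (hq.snd.fst.prodMk (hξ₁.prodMk hξ₂))
  refine (hM.congr_of_eventuallyEq (piX_eventuallyEq hφ)).exists_continuousLinearEquiv ?_
  rw [injective_iff_map_eq_zero]
  rintro ⟨vt, v1, v2, vσ⟩ hv
  simp only [ContinuousLinearMap.prod_apply, ContinuousLinearMap.coe_comp, Function.comp_apply,
    add_apply, FunLike.coe_smul, Pi.smul_apply, ContinuousLinearMap.coe_fst',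
    ContinuousLinearMap.coe_snd', ContinuousLinearMap.flip_apply, zero_apply, map_zero, zero_add,
    forgetCovector_apply, smul_eq_mul, Prod.mk_eq_zero] at hv
  obtain ⟨rfl, rfl, h₁, h₂⟩ := hv
  rw [bolker_eq_fderiv hφ] at hB
  set D := fderiv ℝ (uncurry3 φ) (t, a, b)
  set H := fderiv ℝ (fderiv ℝ (uncurry3 φ)) (t, a, b)
  rw [LinearMapClass.map_triple H] at h₁ h₂
  simp only [add_apply, smul_apply, smul_eq_mul, zero_mul, add_zero] at h₁ h₂
  obtain ⟨hσt, rfl⟩ := eq_zero_and_eq_zero_of_mul_sub_mul_ne_zero (x := σ * vt) (y := vσ)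
    (a := H (1, 0, 0) (0, 1, 0)) (b := D (0, 1, 0)) (c := H (1, 0, 0) (0, 0, 1))
    (d := D (0, 0, 1))
    (fun h ↦ hB (by linear_combination -h)) (by linear_combination h₁) (by linear_combination h₂)
  rw [(mul_eq_zero.1 hσt).resolve_left hσ]
  rfl

end Projections

/-- Lemma 4.3: the correspondence Π_X ∘ Π_Y⁻¹ from measurement covectors to
position covectors is a local diffeomorphism at Π_Y(t₀, x₀, σ₀): there are a
neighborhood U of (t₀,x₀,σ₀), a neighborhood W of Π_Y(t₀,x₀,σ₀), and a map T
on W which is a C¹ diffeomorphism onto its open image and satisfies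
T ∘ Π_Y = Π_X on U. -/
theorem stmt7 (φ : ℝ → ℝ → ℝ → ℝ) (t₀ x₁ x₂ σ₀ : ℝ)
    (hφ : ContDiffAt ℝ 2 (fun p : ℝ × ℝ × ℝ => φ p.1 p.2.1 p.2.2) (t₀, x₁, x₂))
    (hσ : σ₀ ≠ 0) (hB : bolker φ t₀ x₁ x₂ ≠ 0) :
    ∃ (U W : Set (ℝ × ℝ × ℝ × ℝ)) (T S : ℝ × ℝ × ℝ × ℝ → ℝ × ℝ × ℝ × ℝ),
      IsOpen U ∧ (t₀, x₁, x₂, σ₀) ∈ U ∧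
      IsOpen W ∧ PiY φ (t₀, x₁, x₂, σ₀) ∈ W ∧
      IsOpen (T '' W) ∧ Set.InjOn T W ∧ ContDiffOn ℝ 1 T W ∧
      ContDiffOn ℝ 1 S (T '' W) ∧ (∀ w ∈ W, S (T w) = w) ∧
      (∀ q ∈ U, T (PiY φ q) = PiX φ q) := by
  have hφ' : ContDiffAt ℝ 2 (uncurry3 φ) (t₀, x₁, x₂) := hφ
  obtain ⟨eY, hY⟩ := exists_hasFDerivAt_piY hφ' hσ hB
  obtain ⟨eX, hX⟩ := exists_hasFDerivAt_piX hφ' hσ hB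
  exact exists_contDiffOn_comp_localInverse (contDiffAt_piY hφ') hY (contDiffAt_piX hφ') hX
    one_ne_zero (by simp)
end LocalDiffeomorph
end
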